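/- arXiv:1310.4985 — 3 statements merged into one kernel-verified Lean document; each statement's English description precedes it below -/
import Mathlib

section
/- For distinct nonzero complex numbers t_1,...,t_n and s distinct from all t_i: sum over i of (product over j≠i of t_j/(t_i - t_j)) times (t_i/(s - t_i))^2 equals (sum over j of s/(s - t_j) minus 1) times product over i of t_i/(s - t_i). -/
/-!
Put `f i x = t i / (x - t i)` and `c i = ∏ j ≠ i, t j / (t i - t j)`. The barycentric form
of Lagrange interpolation gives the partial fraction decomposition `∏ i, f i = ∑ i, c i * f i`
near `s`. Differentiating both sides at `s`, using `f i ^ 2 = -x f i' - f i` on the left and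
the logarithmic derivative `-∑ j, (x - t j)⁻¹` of the product on the right, gives the identity.
-/

open Finset Polynomial Lagrange Filter Topology

namespace Lagrange

variable {F : Type*} [Field F] {ι : Type*} [DecidableEq ι] {s : Finset ι} {v : ι → F}

theorem sum_nodalWeight_div_sub (hvs : Set.InjOn v s) (hs : s.Nonempty) {x : F}
    (hx : ∀ i ∈ s, x ≠ v i) :
    ∑ i ∈ s, nodalWeight s v i / (x - v i) = (∏ i ∈ s, (x - v i))⁻¹ := by
  have h := eval_interpolate_not_at_node 1 hx
  rw [interpolate_one hvs hs, eval_one, eval_nodal] at h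
  simp only [Pi.one_apply, mul_one, ← div_eq_mul_inv] at h
  exact eq_inv_of_mul_eq_one_right h.symm

theorem prod_erase_div_sub_mul_eq_prod_mul_nodalWeight {i : ι} (hi : i ∈ s) :
    (∏ j ∈ s.erase i, v j / (v i - v j)) * v i = (∏ j ∈ s, v j) * nodalWeight s v i := by
  rw [nodalWeight, ← mul_prod_erase s v hi, prod_div_distrib, div_eq_mul_inv, prod_inv_distrib]
  ring

theorem sum_prod_erase_div_sub_mul_div_sub (hvs : Set.InjOn v s) (hs : s.Nonempty) {x : F}
    (hx : ∀ i ∈ s, x ≠ v i) :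
    ∑ i ∈ s, (∏ j ∈ s.erase i, v j / (v i - v j)) * (v i / (x - v i))
      = ∏ i ∈ s, v i / (x - v i) := by
  simp_rw [← mul_div_assoc]
  rw [sum_congr rfl fun i hi => by
      rw [prod_erase_div_sub_mul_eq_prod_mul_nodalWeight hi, mul_div_assoc],
    ← mul_sum, sum_nodalWeight_div_sub hvs hs hx, prod_div_distrib, div_eq_mul_inv]

end Lagrange

section Deriv

variable {𝕜 : Type*} [NontriviallyNormedField 𝕜] {x : 𝕜}

theorem hasDerivAt_div_sub (c : 𝕜) {a : 𝕜} (hx : x ≠ a) :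
    HasDerivAt (fun y => c / (y - a)) (-(c / (x - a)) / (x - a)) x := by
  refine ((hasDerivAt_const x c).div ((hasDerivAt_id' x).sub_const a)
    (sub_ne_zero.mpr hx)).congr_deriv ?_
  rw [zero_mul, mul_one, zero_sub, neg_div, neg_div, div_div, sq]

variable {ι : Type*} [DecidableEq ι] {s : Finset ι} {v : ι → 𝕜}

theorem hasDerivAt_prod_div_sub (hx : ∀ i ∈ s, x ≠ v i) :
    HasDerivAt (fun y => ∏ i ∈ s, v i / (y - v i))
      (-(∑ i ∈ s, (x - v i)⁻¹) * ∏ i ∈ s, v i / (x - v i)) x := by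
  refine (HasDerivAt.fun_finsetProd fun i hi => hasDerivAt_div_sub (v i) (hx i hi)).congr_deriv ?_
  rw [neg_mul, sum_mul, ← sum_neg_distrib]
  refine sum_congr rfl fun i hi => ?_
  rw [← mul_prod_erase s (fun j => v j / (x - v j)) hi, smul_eq_mul]
  ring

end Deriv

theorem sum_prod_erase_div_sub_mul_div_sub_sq {𝕜 : Type*} [NontriviallyNormedField 𝕜]
    {ι : Type*} [DecidableEq ι] {s : Finset ι} {v : ι → 𝕜} (hvs : Set.InjOn v s)
    (hs : s.Nonempty) {x : 𝕜} (hx : ∀ i ∈ s, x ≠ v i) :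
    ∑ i ∈ s, (∏ j ∈ s.erase i, v j / (v i - v j)) * (v i / (x - v i)) ^ 2
      = ((∑ j ∈ s, x / (x - v j)) - 1) * ∏ i ∈ s, v i / (x - v i) := by
  set c : ι → 𝕜 := fun i => ∏ j ∈ s.erase i, v j / (v i - v j)
  have hnear : ∀ᶠ y in 𝓝 x, ∀ i ∈ s, y ≠ v i :=
    eventually_all_finset s |>.mpr fun i hi => eventually_ne_nhds (hx i hi)
  have hsum : HasDerivAt (fun y => ∑ i ∈ s, c i * (v i / (y - v i)))
      (∑ i ∈ s, c i * (-(v i / (x - v i)) / (x - v i))) x :=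
    HasDerivAt.fun_sum fun i hi => (hasDerivAt_div_sub (v i) (hx i hi)).const_mul (c i)
  have hderiv := hsum.unique <| (hasDerivAt_prod_div_sub hx).congr_of_eventuallyEq <|
    hnear.mono fun y hy => sum_prod_erase_div_sub_mul_div_sub hvs hs hy
  have hsq : ∀ i ∈ s, c i * (v i / (x - v i)) ^ 2
      = -x * (c i * (-(v i / (x - v i)) / (x - v i))) - c i * (v i / (x - v i)) := by
    intro i hi
    have hxi : x - v i ≠ 0 := sub_ne_zero.mpr (hx i hi)
    field_simp
    ring
  calc ∑ i ∈ s, c i * (v i / (x - v i)) ^ 2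
      = -x * ∑ i ∈ s, c i * (-(v i / (x - v i)) / (x - v i))
          - ∑ i ∈ s, c i * (v i / (x - v i)) := by
        rw [mul_sum, ← sum_sub_distrib]
        exact sum_congr rfl hsq
    _ = -x * (-(∑ i ∈ s, (x - v i)⁻¹) * ∏ i ∈ s, v i / (x - v i))
          - ∏ i ∈ s, v i / (x - v i) := by
        rw [hderiv, sum_prod_erase_div_sub_mul_div_sub hvs hs hx]
    _ = ((∑ j ∈ s, x / (x - v j)) - 1) * ∏ i ∈ s, v i / (x - v i) := by
        simp_rw [div_eq_mul_inv x, ← mul_sum]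
        ring

theorem sum_prod_partial_fraction_sq'_general (n : ℕ) (hn : 0 < n) (t : Fin n → ℂ) (s : ℂ)
    (hinj : Function.Injective t)
    (hst : ∀ i, s ≠ t i) :
    ∑ i, (∏ j ∈ univ.erase i, t j / (t i - t j)) * (t i / (s - t i)) ^ 2
      = ((∑ j, s / (s - t j)) - 1) * ∏ i, t i / (s - t i) :=
  sum_prod_erase_div_sub_mul_div_sub_sq hinj.injOn (univ_nonempty_iff.mpr ⟨⟨0, hn⟩⟩)
    fun i _ => hst i

/-- Partial fraction identity with a square:
`∑ i (∏_{j≠i} t_j/(t_i - t_j)) · (t_i/(s - t_i))² =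
  (∑ j s/(s - t_j) - 1) · ∏ i t_i/(s - t_i)`
for distinct nonzero complex numbers `s, t_1, …, t_n`. -/
theorem sum_prod_partial_fraction_sq' (n : ℕ) (hn : 0 < n) (t : Fin n → ℂ) (s : ℂ)
    (ht : ∀ i, t i ≠ 0) (hs : s ≠ 0) (hinj : Function.Injective t)
    (hst : ∀ i, s ≠ t i) :
    ∑ i, (∏ j ∈ univ.erase i, t j / (t i - t j)) * (t i / (s - t i)) ^ 2
      = ((∑ j, s / (s - t j)) - 1) * ∏ i, t i / (s - t i) :=
  sum_prod_partial_fraction_sq'_general n hn t s hinj hst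
end

section
/- Let t_1,...,t_n be distinct nonzero complex numbers and a_1,...,a_n each equal to 1 or 2, with I(1) = {i : a_i = 1} and I(2) = {i : a_i = 2}. Then for any s distinct from all t_i: product over i of (t_i/(s - t_i))^{a_i} equals [sum over i in I(1) of (product over j≠i of (t_j/(t_i - t_j))^{a_j}) · t_i/(s - t_i)] plus [sum over i in I(2) of (product over j≠i of (t_j/(t_i - t_j))^{a_j}) · (s·t_i/(s - t_i)^2 + (sum over j≠i of a_j·t_i/(t_j - t_i) − 1) · t_i/(s - t_i))]. -/
/-!
Multiplying by `D(s) = ∏ (s - t_i)^{a_i}`, the identity becomes the polynomial identity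
`∏ t_i^{a_i} = ∑_i N_i · D / (X - t_i)^{a_i}` with `N_i` the numerator of the principal part at
`t_i`. Both sides have degree `< deg D`, so it suffices that their difference is divisible by each
`(X - t_k)^{a_k}`. Every summand with `i ≠ k` is, and for the `k`-th one this is checked by
evaluating at `t_k` and, when `a_k = 2`, differentiating there via the logarithmic derivative
`D_k'/D_k = ∑_{j ≠ k} a_j / (X - t_j)` of the cofactor `D_k = D / (X - t_k)^2`.
-/

open Finset Polynomial

namespace Polynomial

variable {R : Type*} [CommRing R]

theorem sq_X_sub_C_dvd_of_isRoot_of_isRoot_derivative {p : R[X]} {x : R} (h : p.IsRoot x)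
    (h' : (derivative p).IsRoot x) : (X - C x) ^ 2 ∣ p := by
  rcases eq_or_ne p 0 with rfl | hp
  · exact dvd_zero _
  · exact (le_rootMultiplicity_iff hp).mp ((one_lt_rootMultiplicity_iff_isRoot hp).mpr ⟨h, h'⟩)

theorem natDegree_prod_X_sub_C_pow [Nontrivial R] {ι : Type*} (s : Finset ι) (u : ι → R)
    (b : ι → ℕ) : (∏ j ∈ s, (X - C (u j)) ^ b j).natDegree = ∑ j ∈ s, b j := by
  rw [natDegree_prod_of_monic _ _ fun j _ => (monic_X_sub_C _).pow _]
  simp [(monic_X_sub_C _).natDegree_pow]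

variable {K : Type*} [Field K] {ι : Type*}

theorem eq_zero_of_forall_X_sub_C_pow_dvd [Fintype ι] {t : ι → K} (ht : Function.Injective t)
    {a : ι → ℕ} {p : K[X]} (hdvd : ∀ i, (X - C (t i)) ^ a i ∣ p)
    (hdeg : p.natDegree < ∑ i, a i) : p = 0 :=
  eq_zero_of_dvd_of_natDegree_lt
    (prod_dvd_of_coprime (fun _ _ _ _ hij => (pairwise_coprime_X_sub_C ht hij).pow)
      fun i _ => hdvd i)
    (by rwa [natDegree_prod_X_sub_C_pow])

theorem eval_derivative_prod_X_sub_C_pow [DecidableEq ι] {s : Finset ι} {u : ι → K}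
    (b : ι → ℕ) {x : K} (hx : ∀ j ∈ s, x ≠ u j) :
    eval x (derivative (∏ j ∈ s, (X - C (u j)) ^ b j)) =
      eval x (∏ j ∈ s, (X - C (u j)) ^ b j) * ∑ j ∈ s, b j / (x - u j) := by
  induction s using Finset.induction_on with
  | empty => simp
  | insert j s hj ih =>
    have hxj : x - u j ≠ 0 := sub_ne_zero.mpr (hx j (mem_insert_self j s))
    simp only [prod_insert hj, derivative_mul, derivative_X_sub_C_pow, sum_insert hj, eval_add,
      eval_mul, ih fun i hi => hx i (mem_insert_of_mem hi)]
    rcases b j with _ | m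
    · simp
    · simp [pow_succ]
      field_simp

end Polynomial

section PartialFractions

variable {K : Type*} [Field K] {ι : Type*} [Fintype ι] [DecidableEq ι]
variable (t : ι → K) (a : ι → ℕ)

def residueWeight (i : ι) : K := ∏ j ∈ univ.erase i, (t j / (t i - t j)) ^ a j

noncomputable def cofactor (i : ι) : K[X] := ∏ j ∈ univ.erase i, (X - C (t j)) ^ a j

/-- For `a i ∈ {1, 2}`: the numerator of the principal part of `∏ i, (t i / (X - t i)) ^ a i`
at its pole `t i`, over the denominator `(X - t i) ^ a i`. -/
noncomputable def principalNumerator (i : ι) : K[X] :=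
  C (residueWeight t a i * t i) *
    if a i = 1 then 1
    else C (t i) + C (∑ j ∈ univ.erase i, (a j : K) * t i / (t j - t i)) * (X - C (t i))

variable {t a}

theorem X_sub_C_pow_dvd_cofactor {i k : ι} (hki : k ≠ i) :
    (X - C (t k)) ^ a k ∣ cofactor t a i :=
  dvd_prod_of_mem _ (mem_erase.mpr ⟨hki, mem_univ k⟩)

theorem residueWeight_mul_eval_cofactor_self (ht : Function.Injective t) (k : ι) :
    residueWeight t a k * eval (t k) (cofactor t a k) = ∏ j ∈ univ.erase k, t j ^ a j := by
  rw [residueWeight, cofactor, eval_prod, ← prod_mul_distrib]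
  refine prod_congr rfl fun j hj => ?_
  have hkj : t k - t j ≠ 0 := sub_ne_zero.mpr (ht.ne (ne_of_mem_erase hj).symm)
  simp [div_pow, hkj]

theorem natDegree_principalNumerator_mul_cofactor_le (ha : ∀ i, a i = 1 ∨ a i = 2) (i : ι) :
    (principalNumerator t a i * cofactor t a i).natDegree ≤ ∑ j, a j - 1 := by
  have hsplit := add_sum_erase univ a (mem_univ i)
  have hcof : (cofactor t a i).natDegree = ∑ j ∈ univ.erase i, a j :=
    natDegree_prod_X_sub_C_pow _ _ _
  refine natDegree_mul_le.trans ?_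
  rcases ha i with hi | hi
  · have : (principalNumerator t a i).natDegree = 0 := by
      rw [principalNumerator, if_pos hi, mul_one, natDegree_C]
    omega
  · have : (principalNumerator t a i).natDegree ≤ 1 := by
      rw [principalNumerator, if_neg (by omega)]
      compute_degree
    omega

theorem X_sub_C_pow_dvd_C_prod_sub_principalNumerator_mul_cofactor (ht : Function.Injective t)
    (ha : ∀ i, a i = 1 ∨ a i = 2) (k : ι) :
    (X - C (t k)) ^ a k ∣ C (∏ i, t i ^ a i) - principalNumerator t a k * cofactor t a k := by
  have hprod : ∏ i, t i ^ a i = t k ^ a k * ∏ j ∈ univ.erase k, t j ^ a j :=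
    (mul_prod_erase _ _ (mem_univ k)).symm
  have hw := residueWeight_mul_eval_cofactor_self (a := a) ht k
  have heval : (C (∏ i, t i ^ a i) - principalNumerator t a k * cofactor t a k).IsRoot (t k) := by
    rw [IsRoot, eval_sub, eval_C, eval_mul, principalNumerator, hprod, ← hw]
    rcases ha k with hk | hk <;> simp [hk] <;> ring
  rcases ha k with hk | hk
  · rwa [hk, pow_one, dvd_iff_isRoot]
  rw [hk]
  refine sq_X_sub_C_dvd_of_isRoot_of_isRoot_derivative heval ?_
  have hlog : eval (t k) (derivative (cofactor t a k)) =
      eval (t k) (cofactor t a k) * ∑ j ∈ univ.erase k, (a j : K) / (t k - t j) :=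
    eval_derivative_prod_X_sub_C_pow a fun j hj => ht.ne (ne_of_mem_erase hj).symm
  have hσ : ∑ j ∈ univ.erase k, (a j : K) * t k / (t j - t k) =
      -(t k * ∑ j ∈ univ.erase k, (a j : K) / (t k - t j)) := by
    rw [mul_sum, ← sum_neg_distrib]
    refine sum_congr rfl fun j _ => ?_
    rw [← neg_sub (t k) (t j), div_neg]
    ring
  rw [IsRoot, principalNumerator, if_neg (by omega), hσ]
  simp only [derivative_sub, derivative_C, derivative_mul, derivative_add, derivative_X,
    eval_sub, eval_add, eval_mul, eval_C, eval_X, eval_one, eval_zero, hlog]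
  ring

theorem C_prod_pow_eq_sum_principalNumerator_mul_cofactor [Nonempty ι]
    (ht : Function.Injective t) (ha : ∀ i, a i = 1 ∨ a i = 2) :
    C (∏ i, t i ^ a i) = ∑ i, principalNumerator t a i * cofactor t a i := by
  refine sub_eq_zero.mp (eq_zero_of_forall_X_sub_C_pow_dvd (a := a) ht (fun k => ?_) ?_)
  · rw [← add_sum_erase _ _ (mem_univ k), ← sub_sub]
    exact dvd_sub (X_sub_C_pow_dvd_C_prod_sub_principalNumerator_mul_cofactor ht ha k)
      (dvd_sum fun i hi =>
        dvd_mul_of_dvd_right (X_sub_C_pow_dvd_cofactor (ne_of_mem_erase hi).symm) _)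
  · have hpos : 0 < ∑ j, a j :=
      sum_pos (fun i _ => by rcases ha i with h | h <;> omega) univ_nonempty
    have hle :
        (C (∏ i, t i ^ a i) - ∑ i, principalNumerator t a i * cofactor t a i).natDegree ≤
          ∑ j, a j - 1 :=
      (natDegree_sub_le _ _).trans (max_le ((natDegree_C _).trans_le (Nat.zero_le _))
        (natDegree_sum_le_of_forall_le _ _ fun i _ =>
          natDegree_principalNumerator_mul_cofactor_le ha i))
    omega

theorem prod_div_sub_pow_eq_sum_eval_principalNumerator_div [Nonempty ι]
    (ht : Function.Injective t) (ha : ∀ i, a i = 1 ∨ a i = 2) {s : K} (hs : ∀ i, s ≠ t i) :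
    ∏ i, (t i / (s - t i)) ^ a i =
      ∑ i, eval s (principalNumerator t a i) / (s - t i) ^ a i := by
  have hD : ∀ i, ∏ j, (s - t j) ^ a j = (s - t i) ^ a i * eval s (cofactor t a i) := by
    intro i
    rw [cofactor, eval_prod, ← mul_prod_erase _ _ (mem_univ i)]
    simp
  have hD0 : ∏ j, (s - t j) ^ a j ≠ 0 :=
    prod_ne_zero_iff.mpr fun j _ => pow_ne_zero _ (sub_ne_zero.mpr (hs j))
  calc ∏ i, (t i / (s - t i)) ^ a i = (∏ i, t i ^ a i) / ∏ j, (s - t j) ^ a j := by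
        simp only [div_pow, prod_div_distrib]
    _ = (∑ i, eval s (principalNumerator t a i) * eval s (cofactor t a i)) /
          ∏ j, (s - t j) ^ a j := by
        rw [← eval_C (x := s) (a := ∏ i, t i ^ a i),
          C_prod_pow_eq_sum_principalNumerator_mul_cofactor ht ha, eval_finsetSum]
        simp only [eval_mul]
    _ = _ := by
        rw [sum_div]
        refine sum_congr rfl fun i _ => ?_
        rw [hD i, mul_div_mul_right _ _ (right_ne_zero_of_mul (hD i ▸ hD0))]

theorem eval_principalNumerator_div (ha : ∀ i, a i = 1 ∨ a i = 2) {s : K} (i : ι)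
    (hs : s ≠ t i) :
    eval s (principalNumerator t a i) / (s - t i) ^ a i =
      residueWeight t a i *
        if a i = 1 then t i / (s - t i)
        else s * t i / (s - t i) ^ 2 +
          ((∑ j ∈ univ.erase i, (a j : K) * t i / (t j - t i)) - 1) * (t i / (s - t i)) := by
  have hs' : s - t i ≠ 0 := sub_ne_zero.mpr hs
  rcases ha i with hi | hi
  · simp only [principalNumerator, hi, if_true, eval_C, pow_one, mul_one]
    field_simp
  · simp only [principalNumerator, hi, if_neg (show 2 ≠ 1 by decide), eval_mul, eval_C,
      eval_add, eval_sub, eval_X]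
    field_simp
    ring

end PartialFractions

theorem prod_pow_decomposition'_general (n : ℕ) (hn : 0 < n) (t : Fin n → ℂ) (s : ℂ)
    (a : Fin n → ℕ) (ha : ∀ i, a i = 1 ∨ a i = 2)
    (hinj : Function.Injective t)
    (hst : ∀ i, s ≠ t i) :
    ∏ i, (t i / (s - t i)) ^ a i
      = (∑ i ∈ univ.filter (fun i => a i = 1),
            (∏ j ∈ univ.erase i, (t j / (t i - t j)) ^ a j) * (t i / (s - t i)))
        + ∑ i ∈ univ.filter (fun i => a i = 2),
            (∏ j ∈ univ.erase i, (t j / (t i - t j)) ^ a j) *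
              (s * t i / (s - t i) ^ 2
                + ((∑ j ∈ univ.erase i, (a j : ℂ) * t i / (t j - t i)) - 1)
                    * (t i / (s - t i))) := by
  have : Nonempty (Fin n) := ⟨⟨0, hn⟩⟩
  rw [prod_div_sub_pow_eq_sum_eval_principalNumerator_div hinj ha hst,
    sum_congr rfl fun i _ => eval_principalNumerator_div ha i (hst i)]
  simp only [mul_ite, sum_ite]
  congr 1
  refine sum_congr (filter_congr fun i _ => ?_) fun i _ => rfl
  rcases ha i with hi | hi <;> simp [hi]

/-- Lemma 3.2, identity (3.6): for distinct nonzero `t_i`, exponents `a_i ∈ {1,2}` and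
`s` distinct from all `t_i`,
`∏ i (t_i/(s-t_i))^{a_i}` decomposes as a sum over `I(1)` and `I(2)`. -/
theorem prod_pow_decomposition' (n : ℕ) (hn : 0 < n) (t : Fin n → ℂ) (s : ℂ)
    (a : Fin n → ℕ) (ha : ∀ i, a i = 1 ∨ a i = 2)
    (ht : ∀ i, t i ≠ 0) (hs : s ≠ 0) (hinj : Function.Injective t)
    (hst : ∀ i, s ≠ t i) :
    ∏ i, (t i / (s - t i)) ^ a i
      = (∑ i ∈ univ.filter (fun i => a i = 1),
            (∏ j ∈ univ.erase i, (t j / (t i - t j)) ^ a j) * (t i / (s - t i)))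
        + ∑ i ∈ univ.filter (fun i => a i = 2),
            (∏ j ∈ univ.erase i, (t j / (t i - t j)) ^ a j) *
              (s * t i / (s - t i) ^ 2
                + ((∑ j ∈ univ.erase i, (a j : ℂ) * t i / (t j - t i)) - 1)
                    * (t i / (s - t i))) :=
  prod_pow_decomposition'_general n hn t s a ha hinj hst
end

section
/- Let Q be an even lattice, ν an isometry of Q with ν^m = Id (and ⟨ν^{m/2}α,α⟩ ∈ 2ℤ if m is even), ω a primitive m-th root of unity. Define C(α,β) = ∏_{p ∈ ℤ_m} (−ω^{−p})^{⟨α, ν^p β⟩}. Then C is bimultiplicative, C(α,β)C(β,α) = 1, and C(να, νβ) = C(α,β) for all α, β ∈ Q. -/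
/-!
Bimultiplicativity and `ν`-invariance hold factor by factor. For `C(α,β) C(β,α) = 1`, the
isometry property and `ν^m = 1` give `⟨β, ν^p α⟩ = ⟨α, ν^{-p} β⟩`, so reindexing `C(β,α)` by
`p ↦ -p` in `ℤ_m` (legitimate since `ω^m = 1`) matches each factor `(-ω^{-p})^e` of `C(α,β)`,
`e = ⟨α, ν^p β⟩`, with the factor `(-ω^p)^e`; each such pair multiplies to `1`.
-/

open Finset

/-- The standard bilinear form on `ℤ^N`. -/
def form {N : ℕ} (α β : Fin N → ℤ) : ℤ := ∑ k, α k * β k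

/-- The function `C(α,β) = ∏_{p ∈ ℤ_m} (−ω^{−p})^{⟨α, ν^p β⟩}`. -/
noncomputable def Cfun (N m : ℕ) (ω : ℂ) (ν : AddAut (Fin N → ℤ))
    (α β : Fin N → ℤ) : ℂ :=
  ∏ p ∈ Finset.range m, (-ω ^ (-(p : ℤ))) ^ form α ((p • ν) β)

lemma form_eq_dotProduct {N : ℕ} (α β : Fin N → ℤ) : form α β = α ⬝ᵥ β := rfl

lemma form_comm {N : ℕ} (α β : Fin N → ℤ) : form α β = form β α := by
  simp only [form_eq_dotProduct, dotProduct_comm]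

lemma form_add_left {N : ℕ} (α α' β : Fin N → ℤ) :
    form (α + α') β = form α β + form α' β := by
  simp only [form_eq_dotProduct, add_dotProduct]

lemma form_add_right {N : ℕ} (α β β' : Fin N → ℤ) :
    form α (β + β') = form α β + form α β' := by
  simp only [form_eq_dotProduct, dotProduct_add]

lemma Nat.sub_sub_mod_mod {m p : ℕ} (hp : p < m) : (m - (m - p) % m) % m = p := by
  rcases Nat.eq_zero_or_pos p with rfl | hp0
  · simp
  · rw [Nat.mod_eq_of_lt (by omega : m - p < m), Nat.sub_sub_self hp.le, Nat.mod_eq_of_lt hp]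

lemma Nat.dvd_sub_mod_add {m p : ℕ} (hp : p ≤ m) : m ∣ (m - p) % m + p :=
  Nat.dvd_of_mod_eq_zero (by rw [Nat.mod_add_mod, Nat.sub_add_cancel hp, Nat.mod_self])

/-- `p ↦ (m - p) % m` is negation in `ℤ/mℤ`, read on the representatives `0, …, m - 1`. -/
lemma Finset.prod_range_sub_mod {M : Type*} [CommMonoid M] (f : ℕ → M) (m : ℕ) :
    ∏ p ∈ range m, f ((m - p) % m) = ∏ p ∈ range m, f p := by
  refine prod_nbij' (fun p => (m - p) % m) (fun p => (m - p) % m) ?_ ?_ ?_ ?_ (fun _ _ => rfl)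
  all_goals intro p hp
  · exact mem_range.2 (Nat.mod_lt _ (Nat.zero_lt_of_lt (mem_range.1 hp)))
  · exact mem_range.2 (Nat.mod_lt _ (Nat.zero_lt_of_lt (mem_range.1 hp)))
  · exact Nat.sub_sub_mod_mod (mem_range.1 hp)
  · exact Nat.sub_sub_mod_mod (mem_range.1 hp)

lemma zpow_neg_natCast_eq_pow_of_dvd {G : Type*} [DivisionMonoid G] {ω : G} {m p q : ℕ}
    (hω : ω ^ m = 1) (h : m ∣ q + p) : ω ^ (-(p : ℤ)) = ω ^ q := by
  obtain ⟨k, hk⟩ := h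
  rw [zpow_neg, zpow_natCast]
  exact (eq_inv_of_mul_eq_one_left (by rw [← pow_add, hk, pow_mul, hω, one_pow])).symm

section Isometry

variable {N : ℕ} {ν : AddAut (Fin N → ℤ)}

lemma nsmul_apply_comm (p : ℕ) (x : Fin N → ℤ) : (p • ν) (ν x) = ν ((p • ν) x) := by
  rw [← AddAut.add_apply, ← succ_nsmul, succ_nsmul', AddAut.add_apply]

lemma form_nsmul_apply (hiso : ∀ α β, form (ν α) (ν β) = form α β) (k : ℕ)
    (x y : Fin N → ℤ) : form ((k • ν) x) ((k • ν) y) = form x y := by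
  induction k with
  | zero => rfl
  | succ k ih => rw [succ_nsmul', AddAut.add_apply, AddAut.add_apply, hiso, ih]

lemma nsmul_apply_nsmul_apply_of_dvd {m p q : ℕ} (hord : m • ν = 0) (h : m ∣ q + p)
    (x : Fin N → ℤ) : (q • ν) ((p • ν) x) = x := by
  obtain ⟨k, hk⟩ := h
  rw [← AddAut.add_apply, ← add_nsmul, hk, mul_nsmul, hord, nsmul_zero]
  rfl

end Isometry

section Cfun

variable {N m : ℕ} {ω : ℂ} {ν : AddAut (Fin N → ℤ)}

lemma Cfun_add_left (hω0 : ω ≠ 0) (α α' β : Fin N → ℤ) :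
    Cfun N m ω ν (α + α') β = Cfun N m ω ν α β * Cfun N m ω ν α' β := by
  simp only [Cfun, ← prod_mul_distrib]
  refine prod_congr rfl fun p _ => ?_
  rw [form_add_left, zpow_add₀ (neg_ne_zero.2 (zpow_ne_zero _ hω0))]

lemma Cfun_add_right (hω0 : ω ≠ 0) (α β β' : Fin N → ℤ) :
    Cfun N m ω ν α (β + β') = Cfun N m ω ν α β * Cfun N m ω ν α β' := by
  simp only [Cfun, ← prod_mul_distrib]
  refine prod_congr rfl fun p _ => ?_
  rw [map_add, form_add_right, zpow_add₀ (neg_ne_zero.2 (zpow_ne_zero _ hω0))]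

lemma Cfun_map_map (hiso : ∀ α β, form (ν α) (ν β) = form α β) (α β : Fin N → ℤ) :
    Cfun N m ω ν (ν α) (ν β) = Cfun N m ω ν α β :=
  prod_congr rfl fun p _ => by rw [nsmul_apply_comm, hiso]

lemma Cfun_swap (hω : ω ^ m = 1) (hiso : ∀ α β, form (ν α) (ν β) = form α β)
    (hord : m • ν = 0) (α β : Fin N → ℤ) :
    Cfun N m ω ν β α = ∏ p ∈ range m, (-ω ^ p) ^ form α ((p • ν) β) := by
  rw [Cfun, ← prod_range_sub_mod (fun p => (-ω ^ p) ^ form α ((p • ν) β))]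
  refine prod_congr rfl fun p hp => ?_
  have hdvd : m ∣ (m - p) % m + p := Nat.dvd_sub_mod_add (mem_range.1 hp).le
  rw [zpow_neg_natCast_eq_pow_of_dvd hω hdvd, ← form_nsmul_apply hiso ((m - p) % m),
    nsmul_apply_nsmul_apply_of_dvd hord hdvd, form_comm]

lemma Cfun_mul_Cfun_swap (hω : ω ^ m = 1) (hω0 : ω ≠ 0)
    (hiso : ∀ α β, form (ν α) (ν β) = form α β) (hord : m • ν = 0) (α β : Fin N → ℤ) :
    Cfun N m ω ν α β * Cfun N m ω ν β α = 1 := by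
  rw [Cfun_swap hω hiso hord α β, Cfun, ← prod_mul_distrib]
  refine prod_eq_one fun p _ => ?_
  rw [← mul_zpow, neg_mul_neg, zpow_neg, zpow_natCast, inv_mul_cancel₀ (pow_ne_zero _ hω0),
    one_zpow]

end Cfun

theorem Cfun_properties_general (N m : ℕ) (hm : 0 < m) (ω : ℂ) (hω : IsPrimitiveRoot ω m)
    (Q : AddSubgroup (Fin N → ℤ))
    (ν : AddAut (Fin N → ℤ))
    (hiso : ∀ α β, form (ν α) (ν β) = form α β)
    (hord : m • ν = 0) :
    ∀ α ∈ Q, ∀ β ∈ Q, ∀ α' ∈ Q, ∀ β' ∈ Q,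
      Cfun N m ω ν (α + α') β = Cfun N m ω ν α β * Cfun N m ω ν α' β ∧
      Cfun N m ω ν α (β + β') = Cfun N m ω ν α β * Cfun N m ω ν α β' ∧
      Cfun N m ω ν α β * Cfun N m ω ν β α = 1 ∧
      Cfun N m ω ν (ν α) (ν β) = Cfun N m ω ν α β := by
  have hω0 : ω ≠ 0 := hω.ne_zero hm.ne'
  intro α _ β _ α' _ β' _
  exact ⟨Cfun_add_left hω0 α α' β, Cfun_add_right hω0 α β β',
    Cfun_mul_Cfun_swap hω.pow_eq_one hω0 hiso hord α β, Cfun_map_map hiso α β⟩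

/-- For an even lattice `Q ⊆ ℤ^N`, an isometry `ν` of `Q` with `ν^m = Id`
(and `⟨ν^{m/2}α, α⟩` even when `m` is even), and a primitive `m`-th root of unity
`ω`, the function `C(α,β) = ∏_{p∈ℤ_m}(−ω^{−p})^{⟨α,ν^pβ⟩}` is bimultiplicative,
satisfies `C(α,β)C(β,α) = 1`, and is `ν`-invariant. -/
theorem Cfun_properties (N m : ℕ) (hm : 0 < m) (ω : ℂ) (hω : IsPrimitiveRoot ω m)
    (Q : AddSubgroup (Fin N → ℤ))
    (hQeven : ∀ α ∈ Q, Even (form α α))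
    (ν : AddAut (Fin N → ℤ))
    (hiso : ∀ α β, form (ν α) (ν β) = form α β)
    (hνQ : ∀ α ∈ Q, ν α ∈ Q)
    (hord : m • ν = 0)
    (hA5 : Even m → ∀ α ∈ Q, Even (form (((m / 2) • ν) α) α)) :
    ∀ α ∈ Q, ∀ β ∈ Q, ∀ α' ∈ Q, ∀ β' ∈ Q,
      Cfun N m ω ν (α + α') β = Cfun N m ω ν α β * Cfun N m ω ν α' β ∧
      Cfun N m ω ν α (β + β') = Cfun N m ω ν α β * Cfun N m ω ν α β' ∧
      Cfun N m ω ν α β * Cfun N m ω ν β α = 1 ∧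
      Cfun N m ω ν (ν α) (ν β) = Cfun N m ω ν α β :=
  Cfun_properties_general N m hm ω hω Q ν hiso hord
end
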